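/- Let U, V ∈ ℝ^{d×K} have orthonormal columns with ‖UUᵀ − VVᵀ‖₂ < 1, and let Ĥ = sgn(VᵀU). Then (1/√2)‖UUᵀ − VVᵀ‖_F ≤ ‖VĤ − U‖_F ≤ ‖UUᵀ − VVᵀ‖_F / √(2 − ‖UUᵀ − VVᵀ‖₂²). -/

import Mathlib

open Matrix BigOperators

/-- Squared Frobenius norm of a real matrix. -/
noncomputable def frobSq {m n : Type*} [Fintype m] [Fintype n] (A : Matrix m n ℝ) : ℝ :=
  ∑ i, ∑ j, (A i j) ^ 2

/-- Frobenius norm of a real matrix. -/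
noncomputable def frob {m n : Type*} [Fintype m] [Fintype n] (A : Matrix m n ℝ) : ℝ :=
  Real.sqrt (frobSq A)

/-- Spectral norm (ℓ² operator norm) of a real matrix. -/
noncomputable def specNorm {m n : Type*} [Fintype m] [Fintype n] [DecidableEq n]
    (A : Matrix m n ℝ) : ℝ :=
  ‖LinearMap.toContinuousLinearMap (Matrix.toEuclideanLin A)‖

/-!
Write `VᵀU = P diag(σ) Qᵀ`. For the singular pair `(qⱼ, pⱼ)` of columns of `Q` and `P`, the unit
vector `x = U qⱼ` satisfies `(UUᵀ − VVᵀ) x = x − σⱼ V pⱼ`, a vector of squared length `1 − σⱼ²`.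
Hence `0 ≤ 1 − σⱼ² ≤ ‖UUᵀ − VVᵀ‖₂² < 1`, so every `σⱼ` lies in `(0, 1]` and `Ĥ = P Qᵀ`.
Expanding traces, `‖VĤ − U‖_F² = 2 ∑ (1 − σⱼ)` and `‖UUᵀ − VVᵀ‖_F² = 2 ∑ (1 − σⱼ²)`, and both
bounds follow termwise from `1 − σ² ≤ 2 (1 − σ)` and `(1 − σ)(2 − ε²) ≤ 1 − σ²`, where
`ε = ‖UUᵀ − VVᵀ‖₂`.
-/

lemma one_sub_sq_le_two_mul_one_sub (s : ℝ) : 1 - s ^ 2 ≤ 2 * (1 - s) := by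
  nlinarith [sq_nonneg (1 - s)]

lemma one_sub_mul_two_sub_le_one_sub_sq {s e : ℝ} (hs0 : 0 ≤ s) (hs1 : s ≤ 1)
    (h : 1 - s ^ 2 ≤ e) : (1 - s) * (2 - e) ≤ 1 - s ^ 2 := by
  nlinarith [mul_nonneg (sub_nonneg.2 hs1) (sub_nonneg.2 h), mul_nonneg hs0 (sub_nonneg.2 hs1)]

lemma dotProduct_self_eq_norm_toLp_sq {n : Type*} [Fintype n] (x : n → ℝ) :
    x ⬝ᵥ x = ‖WithLp.toLp 2 x‖ ^ 2 := by
  rw [← real_inner_self_eq_norm_sq, EuclideanSpace.inner_toLp_toLp, star_trivial]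

lemma dotProduct_mulVec_self_le_specNorm_sq {m n : Type*} [Fintype m] [Fintype n]
    [DecidableEq n] (A : Matrix m n ℝ) (x : n → ℝ) :
    (A *ᵥ x) ⬝ᵥ (A *ᵥ x) ≤ specNorm A ^ 2 * (x ⬝ᵥ x) := by
  rw [dotProduct_self_eq_norm_toLp_sq, dotProduct_self_eq_norm_toLp_sq, ← mul_pow]
  gcongr
  exact (LinearMap.toContinuousLinearMap (Matrix.toEuclideanLin A)).le_opNorm (WithLp.toLp 2 x)

lemma mulVec_dotProduct_mulVec {l m n : Type*} [Fintype l] [Fintype m] [Fintype n]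
    (A : Matrix l m ℝ) (B : Matrix l n ℝ) (x : m → ℝ) (y : n → ℝ) :
    (A *ᵥ x) ⬝ᵥ (B *ᵥ y) = x ⬝ᵥ ((Aᵀ * B) *ᵥ y) := by
  rw [← mulVec_mulVec, dotProduct_mulVec x Aᵀ, vecMul_transpose]

lemma col_dotProduct_col_self {m k : Type*} [Fintype m] [DecidableEq k] {Q : Matrix m k ℝ}
    (hQ : Qᵀ * Q = 1) (j : k) : Q.col j ⬝ᵥ Q.col j = 1 := by
  rw [← one_apply_eq (α := ℝ) j, ← hQ, mul_apply']
  rfl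

lemma mul_diagonal_mul_transpose_mulVec_col {m k : Type*} [Fintype k] [DecidableEq k]
    (P : Matrix m k ℝ) (σ : k → ℝ) {Q : Matrix k k ℝ} (hQ : Qᵀ * Q = 1) (j : k) :
    (P * diagonal σ * Qᵀ) *ᵥ Q.col j = σ j • P.col j := by
  rw [← mulVec_single_one Q, mulVec_mulVec, Matrix.mul_assoc, Matrix.mul_assoc, hQ,
    Matrix.mul_one, ← mulVec_mulVec, mulVec_single_one]
  ext i
  simp [mulVec, dotProduct, diagonal_apply, mul_comm]

section Frobenius

variable {l m n : Type*} [Fintype l] [Fintype m] [Fintype n]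

lemma frobSq_eq_trace (A : Matrix m n ℝ) : frobSq A = (Aᵀ * A).trace := by
  simp only [frobSq, trace, diag, mul_apply, transpose_apply, sq]
  exact Finset.sum_comm

lemma frobSq_sub (A B : Matrix m n ℝ) :
    frobSq (A - B) = frobSq A + frobSq B - 2 * (Aᵀ * B).trace := by
  simp only [frobSq_eq_trace, transpose_sub, Matrix.sub_mul, Matrix.mul_sub, trace_sub]
  rw [← trace_transpose (Bᵀ * A), transpose_mul, transpose_transpose]
  ring

lemma frobSq_transpose (A : Matrix m n ℝ) : frobSq Aᵀ = frobSq A := by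
  rw [frobSq_eq_trace, frobSq_eq_trace, transpose_transpose, trace_mul_comm]

lemma frobSq_mul_of_transpose_mul_self [DecidableEq m] {P : Matrix l m ℝ} (hP : Pᵀ * P = 1)
    (A : Matrix m n ℝ) : frobSq (P * A) = frobSq A := by
  rw [frobSq_eq_trace, frobSq_eq_trace, transpose_mul, Matrix.mul_assoc, ← Matrix.mul_assoc Pᵀ,
    hP, Matrix.one_mul]

lemma frobSq_mul_transpose_of_transpose_mul_self [DecidableEq n] {Q : Matrix l n ℝ}
    (hQ : Qᵀ * Q = 1) (A : Matrix m n ℝ) : frobSq (A * Qᵀ) = frobSq A := by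
  rw [← frobSq_transpose, transpose_mul, transpose_transpose, frobSq_mul_of_transpose_mul_self hQ,
    frobSq_transpose]

lemma frobSq_of_transpose_mul_self [DecidableEq n] {U : Matrix m n ℝ} (hU : Uᵀ * U = 1) :
    frobSq U = Fintype.card n := by
  rw [frobSq_eq_trace, hU, trace_one]

lemma frobSq_diagonal [DecidableEq n] (σ : n → ℝ) : frobSq (diagonal σ) = ∑ i, σ i ^ 2 := by
  simp [frobSq, diagonal_apply, ite_pow]

end Frobenius

section Orthonormal

variable {m k : Type*} [Fintype m] [Fintype k] [DecidableEq k] {U V : Matrix m k ℝ}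

lemma dotProduct_self_projDiff_mulVec {p q : k → ℝ} {s : ℝ} (hU : Uᵀ * U = 1)
    (hV : Vᵀ * V = 1) (hq : q ⬝ᵥ q = 1) (hp : p ⬝ᵥ p = 1) (h : (Vᵀ * U) *ᵥ q = s • p) :
    ((U * Uᵀ - V * Vᵀ) *ᵥ (U *ᵥ q)) ⬝ᵥ ((U * Uᵀ - V * Vᵀ) *ᵥ (U *ᵥ q)) = 1 - s ^ 2 := by
  have hUq : (U *ᵥ q) ⬝ᵥ (U *ᵥ q) = 1 := by
    rw [mulVec_dotProduct_mulVec, hU, one_mulVec, hq]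
  have hVp : (V *ᵥ p) ⬝ᵥ (V *ᵥ p) = 1 := by
    rw [mulVec_dotProduct_mulVec, hV, one_mulVec, hp]
  have hVpUq : (V *ᵥ p) ⬝ᵥ (U *ᵥ q) = s := by
    rw [mulVec_dotProduct_mulVec, h, dotProduct_smul, hp, smul_eq_mul, mul_one]
  have hx : (U * Uᵀ - V * Vᵀ) *ᵥ (U *ᵥ q) = U *ᵥ q - s • (V *ᵥ p) := by
    rw [sub_mulVec, mulVec_mulVec, mulVec_mulVec, Matrix.mul_assoc, Matrix.mul_assoc, hU,
      Matrix.mul_one, ← mulVec_mulVec _ V, h, mulVec_smul]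
  rw [hx]
  simp only [sub_dotProduct, dotProduct_sub, smul_dotProduct, dotProduct_smul, smul_eq_mul,
    hUq, hVp, hVpUq, dotProduct_comm (U *ᵥ q)]
  ring

lemma sq_le_one_of_mulVec_eq_smul {p q : k → ℝ} {s : ℝ} (hU : Uᵀ * U = 1)
    (hV : Vᵀ * V = 1) (hq : q ⬝ᵥ q = 1) (hp : p ⬝ᵥ p = 1) (h : (Vᵀ * U) *ᵥ q = s • p) :
    s ^ 2 ≤ 1 := by
  have hnonneg := dotProduct_self_star_nonneg ((U * Uᵀ - V * Vᵀ) *ᵥ (U *ᵥ q))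
  rw [star_trivial, dotProduct_self_projDiff_mulVec hU hV hq hp h] at hnonneg
  linarith

lemma one_sub_sq_le_specNorm_sq [DecidableEq m] {p q : k → ℝ} {s : ℝ} (hU : Uᵀ * U = 1)
    (hV : Vᵀ * V = 1) (hq : q ⬝ᵥ q = 1) (hp : p ⬝ᵥ p = 1) (h : (Vᵀ * U) *ᵥ q = s • p) :
    1 - s ^ 2 ≤ specNorm (U * Uᵀ - V * Vᵀ) ^ 2 := by
  have hUq : (U *ᵥ q) ⬝ᵥ (U *ᵥ q) = 1 := by
    rw [mulVec_dotProduct_mulVec, hU, one_mulVec, hq]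
  have hle := dotProduct_mulVec_self_le_specNorm_sq (U * Uᵀ - V * Vᵀ) (U *ᵥ q)
  rwa [dotProduct_self_projDiff_mulVec hU hV hq hp h, hUq, mul_one] at hle

variable {P Q : Matrix k k ℝ} {σ : k → ℝ}

lemma frobSq_projDiff (hU : Uᵀ * U = 1) (hV : Vᵀ * V = 1) (hP : Pᵀ * P = 1)
    (hQ : Qᵀ * Q = 1) (hSVD : Vᵀ * U = P * diagonal σ * Qᵀ) :
    frobSq (U * Uᵀ - V * Vᵀ) = 2 * ∑ j, (1 - σ j ^ 2) := by
  have hUU : frobSq (U * Uᵀ) = Fintype.card k := by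
    rw [frobSq_mul_of_transpose_mul_self hU, frobSq_transpose, frobSq_of_transpose_mul_self hU]
  have hVV : frobSq (V * Vᵀ) = Fintype.card k := by
    rw [frobSq_mul_of_transpose_mul_self hV, frobSq_transpose, frobSq_of_transpose_mul_self hV]
  have hcross : ((U * Uᵀ)ᵀ * (V * Vᵀ)).trace = frobSq (Vᵀ * U) := by
    rw [frobSq_eq_trace, transpose_mul, transpose_transpose, transpose_mul, transpose_transpose,
      Matrix.mul_assoc, trace_mul_comm]
    simp only [Matrix.mul_assoc]
  rw [frobSq_sub, hUU, hVV, hcross, hSVD, frobSq_mul_transpose_of_transpose_mul_self hQ,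
    frobSq_mul_of_transpose_mul_self hP, frobSq_diagonal, Finset.sum_sub_distrib]
  simp only [Finset.sum_const, Finset.card_univ, nsmul_eq_mul, mul_one]
  ring

lemma frobSq_mul_polar_sub (hU : Uᵀ * U = 1) (hV : Vᵀ * V = 1) (hP : Pᵀ * P = 1)
    (hQ : Qᵀ * Q = 1) (hSVD : Vᵀ * U = P * diagonal σ * Qᵀ) :
    frobSq (V * (P * Qᵀ) - U) = 2 * ∑ j, (1 - σ j) := by
  have hcross : ((V * (P * Qᵀ))ᵀ * U).trace = ∑ j, σ j := by
    rw [transpose_mul, Matrix.mul_assoc, hSVD, transpose_mul, transpose_transpose,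
      Matrix.mul_assoc, ← Matrix.mul_assoc Pᵀ, ← Matrix.mul_assoc Pᵀ, hP, Matrix.one_mul,
      trace_mul_comm, Matrix.mul_assoc, hQ, Matrix.mul_one, trace_diagonal]
  rw [frobSq_sub, hcross, frobSq_mul_of_transpose_mul_self hV,
    frobSq_mul_transpose_of_transpose_mul_self hQ, frobSq_of_transpose_mul_self hP,
    frobSq_of_transpose_mul_self hU, Finset.sum_sub_distrib]
  simp only [Finset.sum_const, Finset.card_univ, nsmul_eq_mul, mul_one]
  ring

end Orthonormal

/-- Let `U, V ∈ ℝ^{d×K}` have orthonormal columns with `‖UUᵀ − VVᵀ‖₂ < 1`, and let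
`Ĥ = sgn(VᵀU)` (given through an SVD `VᵀU = P diag(σ) Qᵀ`).  Then
`(1/√2)‖UUᵀ − VVᵀ‖_F ≤ ‖VĤ − U‖_F ≤ ‖UUᵀ − VVᵀ‖_F / √(2 − ‖UUᵀ − VVᵀ‖₂²)`. -/
theorem frob_Vsign_sandwich {d K : ℕ} (U V : Matrix (Fin d) (Fin K) ℝ)
    (hU : Uᵀ * U = 1) (hV : Vᵀ * V = 1)
    (P Q : Matrix (Fin K) (Fin K) ℝ) (σ : Fin K → ℝ)
    (hP : Pᵀ * P = 1) (hQ : Qᵀ * Q = 1) (hσ0 : ∀ j, 0 ≤ σ j)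
    (hSVD : Vᵀ * U = P * Matrix.diagonal σ * Qᵀ)
    (Hhat : Matrix (Fin K) (Fin K) ℝ)
    (hHhat : Hhat = P * Matrix.diagonal (fun j => if 0 < σ j then (1 : ℝ) else 0) * Qᵀ)
    (hlt : specNorm (U * Uᵀ - V * Vᵀ) < 1) :
    (1 / Real.sqrt 2) * frob (U * Uᵀ - V * Vᵀ) ≤ frob (V * Hhat - U) ∧
    frob (V * Hhat - U) ≤
      frob (U * Uᵀ - V * Vᵀ) / Real.sqrt (2 - specNorm (U * Uᵀ - V * Vᵀ) ^ 2) := by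
  set ε := specNorm (U * Uᵀ - V * Vᵀ)
  have hcol : ∀ j, (Vᵀ * U) *ᵥ Q.col j = σ j • P.col j := fun j => by
    rw [hSVD]
    exact mul_diagonal_mul_transpose_mulVec_col P σ hQ j
  have hunitQ := col_dotProduct_col_self hQ
  have hunitP := col_dotProduct_col_self hP
  have hsin : ∀ j, 1 - σ j ^ 2 ≤ ε ^ 2 := fun j =>
    one_sub_sq_le_specNorm_sq hU hV (hunitQ j) (hunitP j) (hcol j)
  have hσ1 : ∀ j, σ j ≤ 1 := fun j =>
    (sq_le_one_iff₀ (hσ0 j)).1 (sq_le_one_of_mulVec_eq_smul hU hV (hunitQ j) (hunitP j) (hcol j))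
  have hε : ε ^ 2 < 1 := pow_lt_one₀ (norm_nonneg _) hlt two_ne_zero
  have hσpos : ∀ j, 0 < σ j := fun j =>
    (hσ0 j).lt_of_ne' fun h => by linarith [h ▸ hsin j]
  have hH : Hhat = P * Qᵀ := by simp [hHhat, hσpos]
  have hlower : ∑ j, (1 - σ j ^ 2) ≤ 2 * ∑ j, (1 - σ j) := by
    rw [Finset.mul_sum]
    exact Finset.sum_le_sum fun j _ => one_sub_sq_le_two_mul_one_sub (σ j)
  have hupper : (∑ j, (1 - σ j)) * (2 - ε ^ 2) ≤ ∑ j, (1 - σ j ^ 2) := by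
    rw [Finset.sum_mul]
    exact Finset.sum_le_sum fun j _ =>
      one_sub_mul_two_sub_le_one_sub_sq (hσ0 j) (hσ1 j) (hsin j)
  rw [hH, frob, frob, frobSq_mul_polar_sub hU hV hP hQ hSVD, frobSq_projDiff hU hV hP hQ hSVD]
  constructor
  · rw [one_div, inv_mul_le_iff₀ (by positivity), ← Real.sqrt_mul zero_le_two]
    exact Real.sqrt_le_sqrt (by linarith)
  · rw [le_div_iff₀ (Real.sqrt_pos.2 (by linarith)), ← Real.sqrt_mul' _ (by linarith)]
    exact Real.sqrt_le_sqrt (by linarith)
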